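/- arXiv:1605.07860 — 3 statements merged into one kernel-verified Lean document; each statement's English description precedes it below -/
import Mathlib

section
/- Let φ : ℝ² → ℝ be a norm, smooth and elliptic (D²(φ²) ≥ C·Id, C > 0). If ν is a unit vector, τ a unit vector orthogonal to ν, and τ̃ a unit vector with Dφ(ν)·τ̃ = 0, then writing τ̃ = ατ + βν with α, β ∈ [−1,1], one has α ≠ 0 and C ≤ 2φ(ν)α² D²φ(ν)τ·τ ≤ 2φ(ν) D²φ(ν)τ·τ. -/
/-- Dot product on ℝ². -/
def dot2 (a b : ℝ × ℝ) : ℝ := a.1 * b.1 + a.2 * b.2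

/-!
Euler's relation `Dφ(y) y = φ(y)`, differentiated at `ν`, shows that `D²φ(ν)` vanishes on `ν`
(in both slots, by symmetry of the second derivative), so `D²φ(ν)τ̃·τ̃ = α² D²φ(ν)τ·τ`.
Since `D²(φ²) = 2φ D²φ + 2 Dφ ⊗ Dφ` and `Dφ(ν)τ̃ = 0`, ellipticity tested on `τ̃` gives
`C ≤ 2φ(ν)α² D²φ(ν)τ·τ`. The right-hand side is then positive, which forces `α ≠ 0`,
and `α² ≤ 1` gives the last inequality.
-/

open Filter Topology

section ContDiffTwo

variable {𝕜 : Type*} [NontriviallyNormedField 𝕜] {E F : Type*} [NormedAddCommGroup E]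
  [NormedSpace 𝕜 E] [NormedAddCommGroup F] [NormedSpace 𝕜 F] {f : E → F} {x : E}

lemma ContDiffAt.eventually_differentiableAt (hf : ContDiffAt 𝕜 2 f x) :
    ∀ᶠ y in 𝓝 x, DifferentiableAt 𝕜 f y :=
  (hf.eventually (by simp)).mono fun _ hy => hy.differentiableAt two_ne_zero

lemma ContDiffAt.differentiableAt_fderiv (hf : ContDiffAt 𝕜 2 f x) :
    DifferentiableAt 𝕜 (fderiv 𝕜 f) x :=
  (hf.fderiv_right (m := 1) le_rfl).differentiableAt one_ne_zero

end ContDiffTwo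

section RealValued

variable {E : Type*} [NormedAddCommGroup E] [NormedSpace ℝ E] {f : E → ℝ} {x : E}

lemma iteratedFDeriv_two_sq_apply (hf : ContDiffAt ℝ 2 f x) (v w : E) :
    iteratedFDeriv ℝ 2 (fun y => f y ^ 2) x ![v, w] =
      2 * f x * fderiv ℝ (fderiv ℝ f) x v w + 2 * fderiv ℝ f x v * fderiv ℝ f x w := by
  have hsq : (fderiv ℝ fun y => f y ^ 2) =ᶠ[𝓝 x] fun y => (2 * f y) • fderiv ℝ f y :=
    hf.eventually_differentiableAt.mono fun y hy => by
      simpa using (hy.hasFDerivAt.pow 2).fderiv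
  have hderiv := ((((hf.differentiableAt two_ne_zero).hasFDerivAt.const_mul 2).smul
    hf.differentiableAt_fderiv.hasFDerivAt).congr_of_eventuallyEq hsq).fderiv
  rw [iteratedFDeriv_two_apply]
  simp [hderiv]

lemma fderiv_apply_self_of_posHomog (hf : ∀ c : ℝ, 0 < c → ∀ y, f (c • y) = c * f y)
    (hx : DifferentiableAt ℝ f x) : fderiv ℝ f x x = f x := by
  have hray : HasDerivAt (fun t : ℝ => f (t • x)) (fderiv ℝ f x x) 1 :=
    hx.hasFDerivAt.comp_hasDerivAt_of_eq 1
      (by simpa using (hasDerivAt_id (1 : ℝ)).smul_const x) (one_smul ℝ x).symm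
  have hlin : (fun t : ℝ => t * f x) =ᶠ[𝓝 1] fun t => f (t • x) := by
    filter_upwards [eventually_gt_nhds one_pos] with t ht
    exact (hf t ht x).symm
  exact (hray.congr_of_eventuallyEq hlin).unique
    (by simpa using (hasDerivAt_id (1 : ℝ)).mul_const (f x))

lemma fderiv_fderiv_apply_self_of_posHomog (hf : ∀ c : ℝ, 0 < c → ∀ y, f (c • y) = c * f y)
    (hf2 : ContDiffAt ℝ 2 f x) (v : E) : fderiv ℝ (fderiv ℝ f) x v x = 0 := by
  have heuler : (fun y => fderiv ℝ f y y) =ᶠ[𝓝 x] f :=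
    hf2.eventually_differentiableAt.mono fun y hy => fderiv_apply_self_of_posHomog hf hy
  have hprod := hf2.differentiableAt_fderiv.hasFDerivAt.clm_apply (hasFDerivAt_id x)
  have hD := congrArg (· v) ((hprod.congr_of_eventuallyEq heuler.symm).unique
    (hf2.differentiableAt two_ne_zero).hasFDerivAt)
  simpa using hD

lemma fderiv_fderiv_apply_smul_add_smul_of_posHomog
    (hf : ∀ c : ℝ, 0 < c → ∀ y, f (c • y) = c * f y) (hf2 : ContDiffAt ℝ 2 f x)
    (u : E) (a b : ℝ) :
    fderiv ℝ (fderiv ℝ f) x (a • u + b • x) (a • u + b • x) =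
      a ^ 2 * fderiv ℝ (fderiv ℝ f) x u u := by
  have hsymm := hf2.isSymmSndFDerivAt (by simp)
  have hright := fderiv_fderiv_apply_self_of_posHomog hf hf2
  have hleft : fderiv ℝ (fderiv ℝ f) x x = 0 := by
    ext v; rw [hsymm x v, hright]; rfl
  simp [hleft, hright]
  ring

end RealValued

theorem stmt2_general (φ : ℝ × ℝ → ℝ) (C : ℝ) (hC : 0 < C)
    (hhomog : ∀ (c : ℝ) (x : ℝ × ℝ), φ (c • x) = |c| * φ x)
    (hsmooth : ContDiffOn ℝ 2 φ {(0 : ℝ × ℝ)}ᶜ)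
    (hell : ∀ x : ℝ × ℝ, x ≠ 0 → ∀ ξ : ℝ × ℝ,
      C * ‖ξ‖ ^ 2 ≤ iteratedFDeriv ℝ 2 (fun y => (φ y) ^ 2) x ![ξ, ξ])
    (ν τ τ' : ℝ × ℝ) (hν : ‖ν‖ = 1) (hτ' : ‖τ'‖ = 1)
    (hDφ : fderiv ℝ φ ν τ' = 0)
    (α β : ℝ) (hα : α ∈ Set.Icc (-1 : ℝ) 1)
    (hdecomp : τ' = α • τ + β • ν) :
    α ≠ 0 ∧
      C ≤ 2 * φ ν * α ^ 2 * iteratedFDeriv ℝ 2 φ ν ![τ, τ] ∧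
      2 * φ ν * α ^ 2 * iteratedFDeriv ℝ 2 φ ν ![τ, τ]
        ≤ 2 * φ ν * iteratedFDeriv ℝ 2 φ ν ![τ, τ] := by
  have hν0 : ν ≠ 0 := by rintro rfl; simp at hν
  have hpos : ∀ c : ℝ, 0 < c → ∀ y, φ (c • y) = c * φ y := fun c hc y => by
    rw [hhomog, abs_of_pos hc]
  have hφ2 : ContDiffAt ℝ 2 φ ν := hsmooth.contDiffAt (isOpen_compl_singleton.mem_nhds hν0)
  have hD2 : iteratedFDeriv ℝ 2 φ ν ![τ, τ] = fderiv ℝ (fderiv ℝ φ) ν τ τ := by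
    simp [iteratedFDeriv_two_apply]
  have hC_le : C ≤ 2 * φ ν * α ^ 2 * iteratedFDeriv ℝ 2 φ ν ![τ, τ] := by
    have h := hell ν hν0 τ'
    rw [iteratedFDeriv_two_sq_apply hφ2, hDφ, hτ', hdecomp,
      fderiv_fderiv_apply_smul_add_smul_of_posHomog hpos hφ2] at h
    rw [hD2]; linarith
  refine ⟨fun h => by simp [h] at hC_le; linarith, hC_le, ?_⟩
  set P := 2 * φ ν * iteratedFDeriv ℝ 2 φ ν ![τ, τ]
  have hP : C ≤ α ^ 2 * P := by linarith
  have hP_pos : 0 < P := pos_of_mul_pos_right (hC.trans_le hP) (sq_nonneg α)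
  have hα2 : α ^ 2 ≤ 1 := (sq_le_one_iff_abs_le_one α).mpr (abs_le.mpr hα)
  calc 2 * φ ν * α ^ 2 * iteratedFDeriv ℝ 2 φ ν ![τ, τ] = α ^ 2 * P := by ring
    _ ≤ P := mul_le_of_le_one_left hP_pos.le hα2

/-- For a smooth elliptic norm φ, if ν ⊥ τ are unit vectors and τ̃ is a unit
vector with Dφ(ν)·τ̃ = 0, writing τ̃ = ατ + βν with α, β ∈ [−1,1], one has α ≠ 0 and
C ≤ 2φ(ν)α² D²φ(ν)τ·τ ≤ 2φ(ν) D²φ(ν)τ·τ. -/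
theorem stmt2 (φ : ℝ × ℝ → ℝ) (C : ℝ) (hC : 0 < C)
    (hnonneg : ∀ x, 0 ≤ φ x)
    (hhomog : ∀ (c : ℝ) (x : ℝ × ℝ), φ (c • x) = |c| * φ x)
    (htri : ∀ x y, φ (x + y) ≤ φ x + φ y)
    (hdef : ∀ x, φ x = 0 ↔ x = 0)
    (hsmooth : ContDiffOn ℝ 2 φ {(0 : ℝ × ℝ)}ᶜ)
    (hell : ∀ x : ℝ × ℝ, x ≠ 0 → ∀ ξ : ℝ × ℝ,
      C * ‖ξ‖ ^ 2 ≤ iteratedFDeriv ℝ 2 (fun y => (φ y) ^ 2) x ![ξ, ξ])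
    (ν τ τ' : ℝ × ℝ) (hν : ‖ν‖ = 1) (hτ : ‖τ‖ = 1) (hτ' : ‖τ'‖ = 1)
    (horth : dot2 ν τ = 0)
    (hDφ : fderiv ℝ φ ν τ' = 0)
    (α β : ℝ) (hα : α ∈ Set.Icc (-1 : ℝ) 1) (hβ : β ∈ Set.Icc (-1 : ℝ) 1)
    (hdecomp : τ' = α • τ + β • ν) :
    α ≠ 0 ∧
      C ≤ 2 * φ ν * α ^ 2 * iteratedFDeriv ℝ 2 φ ν ![τ, τ] ∧
      2 * φ ν * α ^ 2 * iteratedFDeriv ℝ 2 φ ν ![τ, τ]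
        ≤ 2 * φ ν * iteratedFDeriv ℝ 2 φ ν ![τ, τ] :=
  stmt2_general φ C hC hhomog hsmooth hell ν τ τ' hν hτ' hDφ α β hα hdecomp
end

section
/- Let φ : ℝ² → ℝ be a norm and let n : [0,L] → ℝ² be Lipschitz with φ(n(s)) = 1 for all s. If τ(s) is a unit tangent and ν(s) = τ(s)^⊥ the unit normal of a Lipschitz curve with ν(s)/φ°(ν(s)) ∈ (1/2)∂(φ²)(n(s)) a.e., then ν(s)·n'(s) = 0 for a.e. s; i.e., the derivative of the Cahn-Hoffman field is always tangential. -/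
open MeasureTheory

/-- If n is a Lipschitz Cahn-Hoffman field with φ(n(s)) = 1 and
ν(s)/φ°(ν(s)) ∈ (1/2)∂(φ²)(n(s)) a.e. along a Lipschitz arclength-parametrized curve,
then ν(s)·n'(s) = 0 for a.e. s: the derivative of n is tangential. -/
theorem stmt5 (φ φo : ℝ × ℝ → ℝ) (L : ℝ) (hL : 0 < L)
    (hnonneg : ∀ x, 0 ≤ φ x)
    (hhomog : ∀ (c : ℝ) (x : ℝ × ℝ), φ (c • x) = |c| * φ x)
    (htri : ∀ x y, φ (x + y) ≤ φ x + φ y)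
    (hdef : ∀ x, φ x = 0 ↔ x = 0)
    (u n : ℝ → ℝ × ℝ) (τ ν : ℝ → ℝ × ℝ)
    (Ku Kn : NNReal) (hu : LipschitzWith Ku u) (hn : LipschitzWith Kn n)
    (hτunit : ∀ s, ‖τ s‖ = 1)
    (hν : ∀ s, ν s = (-(τ s).2, (τ s).1))
    (hutang : ∀ᵐ s ∂(volume.restrict (Set.Icc 0 L)),
      ∀ v : ℝ × ℝ, HasDerivAt u v s → v = τ s)
    (hφopos : ∀ s, 0 < φo (ν s))
    (hφn : ∀ s ∈ Set.Icc (0 : ℝ) L, φ (n s) = 1)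
    (hsub : ∀ᵐ s ∂(volume.restrict (Set.Icc 0 L)),
      ∀ y : ℝ × ℝ,
        (φ (n s)) ^ 2 + dot2 ((2 / φo (ν s)) • ν s) (y - n s) ≤ (φ y) ^ 2) :
    ∀ᵐ s ∂(volume.restrict (Set.Icc 0 L)),
      ∀ v : ℝ × ℝ, HasDerivAt n v s → dot2 (ν s) v = 0 := by
  have hres : volume.restrict (Set.Icc (0:ℝ) L) = volume.restrict (Set.Ioo 0 L) :=
    (Measure.restrict_congr_set Ioo_ae_eq_Icc).symm
  rw [hres] at hsub ⊢
  filter_upwards [hsub, ae_restrict_mem measurableSet_Ioo] with s hsubs hs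
  intro v hv
  set f : ℝ → ℝ := fun t => (ν s).1 * (n t).1 + (ν s).2 * (n t).2 with hf
  -- f has a local max at s
  have hmax : IsLocalMax f s := by
    filter_upwards [Ioo_mem_nhds hs.1 hs.2] with t ht
    have h1 := hsubs (n t)
    have hφs := hφn s (Set.mem_Icc_of_Ioo hs)
    have hφt := hφn t (Set.mem_Icc_of_Ioo ht)
    have hc : 0 < φo (ν s) := hφopos s
    have key : dot2 ((2 / φo (ν s)) • ν s) (n t - n s) = (2 / φo (ν s)) * (f t - f s) := by
      simp only [dot2, hf, Prod.smul_fst, Prod.smul_snd, smul_eq_mul,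
        Prod.fst_sub, Prod.snd_sub]
      ring
    rw [key, hφs, hφt] at h1
    have h2 : (2 / φo (ν s)) * (f t - f s) ≤ 0 := by linarith
    have h3 : (0:ℝ) < 2 / φo (ν s) := by positivity
    by_contra hD
    push_neg at hD
    exact absurd h2 (not_le.mpr (mul_pos h3 (by linarith)))
  -- f has derivative dot2 (ν s) v at s
  have hd1 : HasDerivAt (fun t => (n t).1) v.1 s :=
    (ContinuousLinearMap.fst ℝ ℝ ℝ).hasFDerivAt.comp_hasDerivAt s hv
  have hd2 : HasDerivAt (fun t => (n t).2) v.2 s :=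
    (ContinuousLinearMap.snd ℝ ℝ ℝ).hasFDerivAt.comp_hasDerivAt s hv
  have hfd : HasDerivAt f ((ν s).1 * v.1 + (ν s).2 * v.2) s :=
    (hd1.const_mul ((ν s).1)).add (hd2.const_mul ((ν s).2))
  have := hmax.hasDerivAt_eq_zero hfd
  simpa [dot2] using this
end

section
/- Let v : S¹ × [0, t̄] → ℝ be a C² solution of v_t = ψ v_ss + a(s,v,v_s), where ψ ≥ C̃ > 0, and suppose a(s,v,0) ≤ α|v| + β/|v| for positive constants α, β whenever v ≠ 0. Then sup_{S¹×[0,t̄]} v ≤ e^{(α+1)t̄}(√β + sup_{S¹} v⁺(·,0)). -/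
/-- Partial derivative in the first (space) variable. -/
noncomputable def parx {E : Type*} [NormedAddCommGroup E] [NormedSpace ℝ E]
    (f : ℝ → ℝ → E) (x t : ℝ) : E := deriv (fun y => f y t) x

/-- Partial derivative in the second (time) variable. -/
noncomputable def partt {E : Type*} [NormedAddCommGroup E] [NormedSpace ℝ E]
    (f : ℝ → ℝ → E) (x t : ℝ) : E := deriv (fun s => f x s) t

/-- Arclength derivative along the curve u: ∂ₛ f = ∂ₓ f / |uₓ|. -/
noncomputable def arcd {E : Type*} [NormedAddCommGroup E] [NormedSpace ℝ E]
    (u : ℝ → ℝ → ℝ × ℝ) (f : ℝ → ℝ → E) (x t : ℝ) : E := (‖parx u x t‖)⁻¹ • parx f x t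

/-!
Put `m = e^{-(α+1)t} v`, which is periodic in `s`, so it attains its maximum over
`ℝ × [0, t̄]` at some `(s₀, t₀)`. If `t₀ = 0` the maximum is bounded by `sup v⁺(·,0)`.
Otherwise `v_s = 0`, `v_ss ≤ 0` and `(α+1) v ≤ v_t` there, so the equation and the bound on
`a` give `(α+1) v ≤ α v + β / v`, i.e. `v² ≤ β` when `v > 0`. Hence `m ≤ √β + sup v⁺(·,0)`
everywhere, and multiplying back by `e^{(α+1)t} ≤ e^{(α+1)t̄}` gives the bound.
-/

open Filter Set Real Topology

theorem IsLocalMax.deriv_deriv_nonpos {f : ℝ → ℝ} {x₀ : ℝ} (h : IsLocalMax f x₀)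
    (hc : ContinuousAt f x₀) : deriv (deriv f) x₀ ≤ 0 := by
  by_contra! hpos
  have hmin := isLocalMin_of_deriv_deriv_pos hpos h.deriv_eq_zero hc
  have hconst : f =ᶠ[𝓝 x₀] fun _ => f x₀ :=
    (hmin.and h).mono fun _ hx => le_antisymm hx.2 hx.1
  have hzero : deriv (deriv f) x₀ = 0 := by
    rw [hconst.deriv.deriv_eq]
    simp
  exact hpos.ne' hzero

theorem HasDerivAt.nonneg_of_isMaxOn_Icc {g : ℝ → ℝ} {g' a b : ℝ} (hg : HasDerivAt g g' b)
    (hab : a < b) (hmax : IsMaxOn g (Icc a b) b) : 0 ≤ g' := by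
  have hcone : a - b ∈ posTangentConeAt (Icc a b) b :=
    sub_mem_posTangentConeAt_of_segment_subset (segment_eq_Icc' b a ▸ by simp [hab.le])
  have := hmax.localize.hasFDerivWithinAt_nonpos hg.hasDerivWithinAt.hasFDerivWithinAt hcone
  simp only [ContinuousLinearMap.toSpanSingleton_apply, smul_eq_mul] at this
  nlinarith

theorem HasDerivAt.mul_le_of_isMaxOn_exp_neg_mul {g : ℝ → ℝ} {g' a b c : ℝ}
    (hg : HasDerivAt g g' b) (hab : a < b)
    (hmax : IsMaxOn (fun t => Real.exp (-(c * t)) * g t) (Icc a b) b) : c * g b ≤ g' := by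
  have hd : HasDerivAt (fun t => Real.exp (-(c * t)) * g t)
      (Real.exp (-(c * b)) * (g' - c * g b)) b :=
    (((hasDerivAt_id b).const_mul c).neg.exp.mul hg).congr_deriv
      (by simp only [Pi.neg_apply, id]; ring)
  have := (mul_nonneg_iff_of_pos_left (exp_pos _)).1 (hd.nonneg_of_isMaxOn_Icc hab hmax)
  linarith

theorem exists_isMaxOn_univ_prod_of_periodic {β γ : Type*} [TopologicalSpace β]
    [TopologicalSpace γ] [LinearOrder γ] [OrderClosedTopology γ] {f : ℝ × β → γ} {c : ℝ}
    (hc : 0 < c) (hper : ∀ b, Function.Periodic (fun s => f (s, b)) c) (hf : Continuous f)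
    {K : Set β} (hK : IsCompact K) (hne : K.Nonempty) :
    ∃ p ∈ univ ×ˢ K, IsMaxOn f (univ ×ˢ K) p := by
  obtain ⟨p, hp, hmax⟩ := (isCompact_Icc.prod hK).exists_isMaxOn
    ((nonempty_Icc.2 hc.le).prod hne) hf.continuousOn
  refine ⟨p, ⟨trivial, hp.2⟩, ?_⟩
  rintro ⟨s, b⟩ ⟨-, hb⟩
  obtain ⟨y, hy, hfy⟩ := (hper b).exists_mem_Ico₀ hc s
  exact hfy.trans_le (hmax ⟨Ico_subset_Icc_self hy, hb⟩)

theorem Function.Periodic.le_csSup_range {α : Type*} [ConditionallyCompleteLinearOrder α]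
    [TopologicalSpace α] [OrderClosedTopology α] {f : ℝ → α} {c : ℝ} (hp : Function.Periodic f c)
    (hc : c ≠ 0) (hf : Continuous f) (x : ℝ) : f x ≤ sSup (range f) :=
  le_csSup (hp.compact_of_continuous hc hf).bddAbove ⟨x, rfl⟩

theorem exp_neg_mul_mul_le {c t w B : ℝ} (hc : 0 ≤ c) (ht : 0 ≤ t) (hw : w ≤ B) (hB : 0 ≤ B) :
    Real.exp (-(c * t)) * w ≤ B :=
  calc Real.exp (-(c * t)) * w ≤ Real.exp (-(c * t)) * B := by gcongr
    _ ≤ B := mul_le_of_le_one_left hB (exp_le_one_iff.2 (by nlinarith))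

theorem le_exp_mul_of_exp_neg_mul_le {c t T w B : ℝ} (hc : 0 ≤ c) (ht : t ≤ T) (hB : 0 ≤ B)
    (h : Real.exp (-(c * t)) * w ≤ B) : w ≤ Real.exp (c * T) * B :=
  calc w = Real.exp (c * t) * (Real.exp (-(c * t)) * w) := by
        rw [← mul_assoc, ← Real.exp_add, add_neg_cancel, exp_zero, one_mul]
    _ ≤ Real.exp (c * t) * B := by gcongr
    _ ≤ Real.exp (c * T) * B := by gcongr

theorem le_sqrt_of_isMaxOn_exp_neg_mul {α β T s₀ t₀ : ℝ} {v ψ : ℝ → ℝ → ℝ}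
    {a : ℝ → ℝ → ℝ → ℝ} (hv : ContDiff ℝ 2 (fun p : ℝ × ℝ => v p.1 p.2))
    (hψ : 0 ≤ ψ s₀ t₀)
    (heq : partt v s₀ t₀ = ψ s₀ t₀ * parx (parx v) s₀ t₀ + a s₀ (v s₀ t₀) (parx v s₀ t₀))
    (ha : ∀ w, w ≠ 0 → a s₀ w 0 ≤ α * |w| + β / |w|) (ht₀ : t₀ ∈ Ioc 0 T)
    (hmax : IsMaxOn (fun p : ℝ × ℝ => Real.exp (-((α + 1) * p.2)) * v p.1 p.2)
      (univ ×ˢ Icc 0 T) (s₀, t₀)) :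
    v s₀ t₀ ≤ √β := by
  have hspace : IsLocalMax (fun s => v s t₀) s₀ := Eventually.of_forall fun s =>
    le_of_mul_le_mul_left (hmax (show (s, t₀) ∈ univ ×ˢ Icc 0 T from ⟨trivial, ht₀.1.le, ht₀.2⟩))
      (exp_pos _)
  have htime : IsMaxOn (fun t => Real.exp (-((α + 1) * t)) * v s₀ t) (Icc 0 t₀) t₀ :=
    fun t ht => hmax (show (s₀, t) ∈ univ ×ˢ Icc 0 T from ⟨trivial, ht.1, ht.2.trans ht₀.2⟩)
  have hvs : parx v s₀ t₀ = 0 := hspace.deriv_eq_zero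
  have hvss : parx (parx v) s₀ t₀ ≤ 0 :=
    hspace.deriv_deriv_nonpos
      (hv.continuous.comp (continuous_id.prodMk continuous_const)).continuousAt
  have hvt : (α + 1) * v s₀ t₀ ≤ partt v s₀ t₀ := by
    have hdiff : Differentiable ℝ fun t => v s₀ t :=
      (hv.comp (contDiff_const.prodMk contDiff_id)).differentiable (by norm_num)
    exact (hdiff t₀).hasDerivAt.mul_le_of_isMaxOn_exp_neg_mul ht₀.1 htime
  rcases le_or_gt (v s₀ t₀) 0 with hw | hw
  · exact hw.trans (sqrt_nonneg β)
  have hwβ : v s₀ t₀ ≤ β / v s₀ t₀ := by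
    have := ha _ hw.ne'
    rw [abs_of_pos hw] at this
    rw [hvs] at heq
    linarith [mul_nonpos_of_nonneg_of_nonpos hψ hvss]
  rw [le_div_iff₀ hw] at hwβ
  exact Real.le_sqrt_of_sq_le (by nlinarith)

theorem stmt13_general (tbar α β Ct : ℝ) (hα : 0 < α)
    (hCt : 0 < Ct)
    (v ψ : ℝ → ℝ → ℝ) (a : ℝ → ℝ → ℝ → ℝ)
    (hv : ContDiff ℝ 2 (fun p : ℝ × ℝ => v p.1 p.2))
    (hper : ∀ s t, v (s + 2 * Real.pi) t = v s t)
    (hψ : ∀ s t, Ct ≤ ψ s t)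
    (heq : ∀ s, ∀ t ∈ Set.Icc (0 : ℝ) tbar,
      partt v s t = ψ s t * parx (parx v) s t + a s (v s t) (parx v s t))
    (ha : ∀ s w, w ≠ 0 → a s w 0 ≤ α * |w| + β / |w|) :
    ∀ s, ∀ t ∈ Set.Icc (0 : ℝ) tbar,
      v s t ≤ Real.exp ((α + 1) * tbar)
        * (Real.sqrt β + sSup (Set.range fun s' => max (v s' 0) 0)) := by
  intro s t ht
  set m : ℝ × ℝ → ℝ := fun p => Real.exp (-((α + 1) * p.2)) * v p.1 p.2 with hm
  set L := sSup (Set.range fun s' => max (v s' 0) 0)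
  have hv₀ : ∀ s', max (v s' 0) 0 ≤ L :=
    Function.Periodic.le_csSup_range (c := 2 * π) (fun _ => by simp only [hper])
      two_pi_pos.ne' (by fun_prop)
  have hL : 0 ≤ L := (le_max_right (v 0 0) 0).trans (hv₀ 0)
  obtain ⟨⟨s₀, t₀⟩, ⟨-, ht₀⟩, hmax⟩ := exists_isMaxOn_univ_prod_of_periodic (f := m) two_pi_pos
    (fun _ _ => by simp only [hm, hper]) (by fun_prop) isCompact_Icc ⟨t, ht⟩
  have hmax_le : m (s₀, t₀) ≤ √β + L := by
    rcases ht₀.1.eq_or_lt with h0 | hpos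
    · subst h0
      simp only [hm, mul_zero, neg_zero, exp_zero, one_mul]
      linarith [le_max_left (v s₀ 0) 0, hv₀ s₀, sqrt_nonneg β]
    · refine exp_neg_mul_mul_le (by linarith) hpos.le ?_ (by positivity)
      have := le_sqrt_of_isMaxOn_exp_neg_mul hv (hCt.le.trans (hψ s₀ t₀))
        (heq s₀ t₀ ht₀) (ha s₀) ⟨hpos, ht₀.2⟩ hmax
      linarith
  exact le_exp_mul_of_exp_neg_mul_le (by linarith) ht.2 (by positivity)
    ((hmax (show (s, t) ∈ univ ×ˢ Icc 0 tbar from ⟨trivial, ht⟩)).trans hmax_le)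

/-- Maximum principle: if v solves v_t = ψ v_ss + a(s,v,v_s) on S¹ × [0,t̄]
with ψ ≥ C̃ > 0 and a(s,w,0) ≤ α|w| + β/|w| for w ≠ 0, then
sup v ≤ e^{(α+1)t̄}(√β + sup_{S¹} v⁺(·,0)). -/
theorem stmt13 (tbar α β Ct : ℝ) (htbar : 0 ≤ tbar) (hα : 0 < α) (hβ : 0 < β)
    (hCt : 0 < Ct)
    (v ψ : ℝ → ℝ → ℝ) (a : ℝ → ℝ → ℝ → ℝ)
    (hv : ContDiff ℝ 2 (fun p : ℝ × ℝ => v p.1 p.2))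
    (hper : ∀ s t, v (s + 2 * Real.pi) t = v s t)
    (hψ : ∀ s t, Ct ≤ ψ s t)
    (heq : ∀ s, ∀ t ∈ Set.Icc (0 : ℝ) tbar,
      partt v s t = ψ s t * parx (parx v) s t + a s (v s t) (parx v s t))
    (ha : ∀ s w, w ≠ 0 → a s w 0 ≤ α * |w| + β / |w|) :
    ∀ s, ∀ t ∈ Set.Icc (0 : ℝ) tbar,
      v s t ≤ Real.exp ((α + 1) * tbar)
        * (Real.sqrt β + sSup (Set.range fun s' => max (v s' 0) 0)) :=
  stmt13_general tbar α β Ct hα hCt v ψ a hv hper hψ heq ha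
end
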